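/- Under the product test-channel structure, for any nonempty I ⊆ {1,...,M}, I(X_I; Z_I | Z_{I^c}, S) ≤ Σ_{i∈I} I(X_i; Z_i | Z_{{1,...,i-1}}, S). -/

import Mathlib

open Finset

/-- Probability that a random variable `f` (on finite sample space `Ω` with pmf `μ`)
takes the value `a`. -/
noncomputable def pr {Ω : Type} [Fintype Ω] (μ : Ω → ℝ) {A : Type} [Fintype A] [DecidableEq A]
    (f : Ω → A) (a : A) : ℝ :=
  ∑ ω, if f ω = a then μ ω else 0

/-- Shannon entropy of a finite random variable. -/
noncomputable def ent {Ω : Type} [Fintype Ω] (μ : Ω → ℝ) {A : Type} [Fintype A] [DecidableEq A]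
    (f : Ω → A) : ℝ :=
  -∑ a, pr μ f a * Real.log (pr μ f a)

/-- Conditional entropy `H(f | g)`. -/
noncomputable def condEnt {Ω : Type} [Fintype Ω] (μ : Ω → ℝ) {A B : Type}
    [Fintype A] [DecidableEq A] [Fintype B] [DecidableEq B] (f : Ω → A) (g : Ω → B) : ℝ :=
  ent μ (fun ω => (f ω, g ω)) - ent μ g

/-- Mutual information `I(f ; g)`. -/
noncomputable def mi {Ω : Type} [Fintype Ω] (μ : Ω → ℝ) {A B : Type}
    [Fintype A] [DecidableEq A] [Fintype B] [DecidableEq B] (f : Ω → A) (g : Ω → B) : ℝ :=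
  ent μ f + ent μ g - ent μ (fun ω => (f ω, g ω))

/-- Conditional mutual information `I(f ; g | h)`. -/
noncomputable def cmi {Ω : Type} [Fintype Ω] (μ : Ω → ℝ) {A B C : Type}
    [Fintype A] [DecidableEq A] [Fintype B] [DecidableEq B] [Fintype C] [DecidableEq C]
    (f : Ω → A) (g : Ω → B) (h : Ω → C) : ℝ :=
  ent μ (fun ω => (f ω, h ω)) + ent μ (fun ω => (g ω, h ω))
    - ent μ (fun ω => (f ω, g ω, h ω)) - ent μ h


-- Auxiliary general lemmas
section Helpers
variable {Ω : Type} [Fintype Ω] {μ : Ω → ℝ} {A B C : Type}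
  [Fintype A] [DecidableEq A] [Fintype B] [DecidableEq B] [Fintype C] [DecidableEq C]

lemma pr_nonneg (hμ : ∀ ω, 0 ≤ μ ω) (f : Ω → A) (a : A) : 0 ≤ pr μ f a := by
  refine Finset.sum_nonneg fun ω _ => ?_
  split <;> simp [hμ ω]

lemma pr_comp (f : Ω → A) (L : A → ℝ) :
    ∑ a, pr μ f a * L a = ∑ ω, μ ω * L (f ω) := by
  unfold pr
  simp only [Finset.sum_mul]
  rw [Finset.sum_comm]
  refine Finset.sum_congr rfl fun ω _ => ?_
  rw [Finset.sum_eq_single (f ω)] <;> simp +contextual [eq_comm]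

lemma sum_pr (f : Ω → A) : ∑ a, pr μ f a = ∑ ω, μ ω := by
  have := pr_comp (μ := μ) f (fun _ => (1:ℝ))
  simpa using this

/-- marginal over first coordinate of a pair -/
lemma pr_marg_fst (f : Ω → A) (g : Ω → B) (b : B) :
    ∑ a, pr μ (fun ω => (f ω, g ω)) (a, b) = pr μ g b := by
  unfold pr
  rw [Finset.sum_comm]
  refine Finset.sum_congr rfl fun ω _ => ?_
  by_cases h : g ω = b
  · rw [Finset.sum_eq_single (f ω)] <;> simp +contextual [Prod.ext_iff, h, eq_comm]
  · simp [Prod.ext_iff, h]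

lemma pr_marg_snd (f : Ω → A) (g : Ω → B) (a : A) :
    ∑ b, pr μ (fun ω => (f ω, g ω)) (a, b) = pr μ f a := by
  unfold pr
  rw [Finset.sum_comm]
  refine Finset.sum_congr rfl fun ω _ => ?_
  by_cases h : f ω = a
  · rw [Finset.sum_eq_single (g ω)] <;> simp +contextual [Prod.ext_iff, h, eq_comm]
  · simp [Prod.ext_iff, h]

lemma pr_comp_inj (e : A → B) (he : Function.Injective e) (f : Ω → A) (a : A) :
    pr μ (fun ω => e (f ω)) (e a) = pr μ f a := by
  unfold pr
  refine Finset.sum_congr rfl fun ω _ => ?_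
  simp [he.eq_iff]

lemma ent_comp_inj (e : A → B) (he : Function.Injective e) (f : Ω → A) :
    ent μ (fun ω => e (f ω)) = ent μ f := by
  unfold ent
  congr 1
  calc ∑ b : B, pr μ (fun ω => e (f ω)) b * Real.log (pr μ (fun ω => e (f ω)) b)
      = ∑ b ∈ Finset.image e univ, pr μ (fun ω => e (f ω)) b * Real.log (pr μ (fun ω => e (f ω)) b) := by
        refine (Finset.sum_subset (Finset.subset_univ _) ?_).symm
        intro b _ hb
        have hz : pr μ (fun ω => e (f ω)) b = 0 := by
          unfold pr
          refine Finset.sum_eq_zero fun ω _ => ?_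
          have : e (f ω) ≠ b := fun h => hb (Finset.mem_image.mpr ⟨f ω, Finset.mem_univ _, h⟩)
          simp [this]
        simp [hz]
    _ = ∑ a : A, pr μ (fun ω => e (f ω)) (e a) * Real.log (pr μ (fun ω => e (f ω)) (e a)) :=
        Finset.sum_image (fun x _ y _ h => he h)
    _ = ∑ a : A, pr μ f a * Real.log (pr μ f a) := by
        refine Finset.sum_congr rfl fun a _ => ?_
        rw [pr_comp_inj e he]

lemma ent_congr {f : Ω → A} {g : Ω → B} (e : A → B) (e' : B → A)
    (h1 : ∀ ω, g ω = e (f ω)) (h2 : ∀ ω, f ω = e' (g ω)) : ent μ f = ent μ g := by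
  have hpair : ent μ (fun ω => (f ω, g ω)) = ent μ f := by
    have : (fun ω => (f ω, g ω)) = fun ω => ((fun a => (a, e a)) (f ω)) := by
      funext ω; simp [h1 ω]
    rw [this, ent_comp_inj (fun a => (a, e a)) (fun a a' h => congrArg Prod.fst h)]
  have hswap : ent μ (fun ω => (g ω, f ω)) = ent μ (fun ω => (f ω, g ω)) := by
    have : (fun ω => (f ω, g ω)) = fun ω => Prod.swap ((fun ω => (g ω, f ω)) ω) := rfl
    rw [this, ent_comp_inj Prod.swap Prod.swap_injective]
  have hpair2 : ent μ (fun ω => (g ω, f ω)) = ent μ g := by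
    have : (fun ω => (g ω, f ω)) = fun ω => ((fun b => (b, e' b)) (g ω)) := by
      funext ω; simp [h2 ω]
    rw [this, ent_comp_inj (fun b => (b, e' b)) (fun a a' h => congrArg Prod.fst h)]
  rw [← hpair, ← hswap, hpair2]

end Helpers

section MoreHelpers
variable {Ω : Type} [Fintype Ω] {μ : Ω → ℝ} {A B C : Type}
  [Fintype A] [DecidableEq A] [Fintype B] [DecidableEq B] [Fintype C] [DecidableEq C]

lemma pr_marg_mid (f : Ω → A) (g : Ω → B) (h : Ω → C) (a : A) (c : C) :
    ∑ b, pr μ (fun ω => (f ω, g ω, h ω)) (a, b, c) = pr μ (fun ω => (f ω, h ω)) (a, c) := by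
  unfold pr
  rw [Finset.sum_comm]
  refine Finset.sum_congr rfl fun ω _ => ?_
  by_cases hfa : f ω = a ∧ h ω = c
  · rw [Finset.sum_eq_single (g ω)] <;> simp +contextual [Prod.ext_iff, hfa.1, hfa.2, eq_comm]
  · rw [Finset.sum_eq_zero]
    · rw [if_neg (by simpa [Prod.ext_iff] using hfa)]
    · intro b _
      rw [if_neg]
      simp only [Prod.ext_iff]
      tauto

end MoreHelpers

section CMI
variable {Ω : Type} [Fintype Ω] {μ : Ω → ℝ} {A B C : Type}
  [Fintype A] [DecidableEq A] [Fintype B] [DecidableEq B] [Fintype C] [DecidableEq C]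

lemma cmi_nonneg (hμ : ∀ ω, 0 ≤ μ ω) (f : Ω → A) (g : Ω → B) (h : Ω → C) :
    0 ≤ cmi μ f g h := by
  classical
  set P : A → B → C → ℝ := fun a b c => pr μ (fun ω => (f ω, g ω, h ω)) (a, b, c) with hPdef
  set Pf : A → C → ℝ := fun a c => pr μ (fun ω => (f ω, h ω)) (a, c) with hPfdef
  set Pg : B → C → ℝ := fun b c => pr μ (fun ω => (g ω, h ω)) (b, c) with hPgdef
  set Ph : C → ℝ := fun c => pr μ h c with hPhdef
  have m1 : ∀ a c, ∑ b, P a b c = Pf a c := fun a c => pr_marg_mid f g h a c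
  have m2 : ∀ b c, ∑ a, P a b c = Pg b c := fun b c => pr_marg_fst f (fun ω => (g ω, h ω)) (b, c)
  have m3 : ∀ c, ∑ a, Pf a c = Ph c := fun c => pr_marg_fst f h c
  have m4 : ∀ c, ∑ b, Pg b c = Ph c := fun c => pr_marg_fst g h c
  have hP0 : ∀ a b c, 0 ≤ P a b c := fun a b c => pr_nonneg hμ _ _
  have hPf0 : ∀ a c, 0 ≤ Pf a c := fun a c => pr_nonneg hμ _ _
  have hPg0 : ∀ b c, 0 ≤ Pg b c := fun b c => pr_nonneg hμ _ _
  have hPh0 : ∀ c, 0 ≤ Ph c := fun c => pr_nonneg hμ _ _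
  set Q : A → B → C → ℝ := fun a b c => if Ph c = 0 then 0 else Pf a c * Pg b c / Ph c with hQdef
  have hQ0 : ∀ a b c, 0 ≤ Q a b c := by
    intro a b c
    by_cases hc : Ph c = 0
    · simp [hQdef, hc]
    · simp only [hQdef, if_neg hc]
      exact div_nonneg (mul_nonneg (hPf0 a c) (hPg0 b c)) (hPh0 c)
  have e4 : ent μ (fun ω => (f ω, g ω, h ω)) = -∑ a, ∑ b, ∑ c, P a b c * Real.log (P a b c) := by
    unfold ent; rw [Fintype.sum_prod_type]; congr 2 with a; rw [Fintype.sum_prod_type]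
  have e1 : ent μ (fun ω => (f ω, h ω)) = -∑ a, ∑ c, Pf a c * Real.log (Pf a c) := by
    unfold ent; rw [Fintype.sum_prod_type]
  have e2 : ent μ (fun ω => (g ω, h ω)) = -∑ b, ∑ c, Pg b c * Real.log (Pg b c) := by
    unfold ent; rw [Fintype.sum_prod_type]
  have e3 : ent μ h = -∑ c, Ph c * Real.log (Ph c) := rfl
  have t1 : ∑ a, ∑ b, ∑ c, P a b c * Real.log (Pf a c) = ∑ a, ∑ c, Pf a c * Real.log (Pf a c) := by
    refine Finset.sum_congr rfl fun a _ => ?_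
    rw [Finset.sum_comm]
    refine Finset.sum_congr rfl fun c _ => ?_
    rw [← m1 a c, Finset.sum_mul]
  have t2 : ∑ a, ∑ b, ∑ c, P a b c * Real.log (Pg b c) = ∑ b, ∑ c, Pg b c * Real.log (Pg b c) := by
    rw [Finset.sum_comm]
    refine Finset.sum_congr rfl fun b _ => ?_
    rw [Finset.sum_comm]
    refine Finset.sum_congr rfl fun c _ => ?_
    rw [← m2 b c, Finset.sum_mul]
  have t3 : ∀ (L : C → ℝ), ∑ a, ∑ b, ∑ c, P a b c * L c = ∑ c, Ph c * L c := by
    intro L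
    have : ∀ a, ∑ b, ∑ c, P a b c * L c = ∑ c, Pf a c * L c := by
      intro a; rw [Finset.sum_comm]
      refine Finset.sum_congr rfl fun c _ => ?_
      rw [← m1 a c, Finset.sum_mul]
    simp only [this]
    rw [Finset.sum_comm]
    refine Finset.sum_congr rfl fun c _ => ?_
    rw [← m3 c, Finset.sum_mul]
  have comb : cmi μ f g h
      = ∑ a, ∑ b, ∑ c, P a b c * (Real.log (P a b c) + Real.log (Ph c)
          - Real.log (Pf a c) - Real.log (Pg b c)) := by
    unfold cmi
    rw [e1, e2, e3, e4]
    simp only [mul_add, mul_sub, Finset.sum_add_distrib, Finset.sum_sub_distrib]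
    rw [t1, t2, t3 (fun c => Real.log (Ph c))]
    ring
  have pw : ∀ a b c, P a b c - Q a b c ≤ P a b c * (Real.log (P a b c) + Real.log (Ph c)
      - Real.log (Pf a c) - Real.log (Pg b c)) := by
    intro a b c
    rcases (hP0 a b c).eq_or_lt with hz | hpos
    · rw [← hz]
      simpa using hQ0 a b c
    · have hf : 0 < Pf a c := lt_of_lt_of_le hpos
        (by rw [← m1 a c]; exact Finset.single_le_sum (fun b' _ => hP0 a b' c) (mem_univ b))
      have hg : 0 < Pg b c := lt_of_lt_of_le hpos
        (by rw [← m2 b c]; exact Finset.single_le_sum (fun a' _ => hP0 a' b c) (mem_univ a))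
      have hh : 0 < Ph c := lt_of_lt_of_le hf
        (by rw [← m3 c]; exact Finset.single_le_sum (fun a' _ => hPf0 a' c) (mem_univ a))
      have hQ : Q a b c = Pf a c * Pg b c / Ph c := if_neg hh.ne'
      have hQpos : 0 < Q a b c := by rw [hQ]; positivity
      have hlog : Real.log (Q a b c / P a b c) ≤ Q a b c / P a b c - 1 :=
        Real.log_le_sub_one_of_pos (by positivity)
      have hexp : Real.log (Q a b c / P a b c)
          = Real.log (Pf a c) + Real.log (Pg b c) - Real.log (Ph c) - Real.log (P a b c) := by
        rw [Real.log_div hQpos.ne' hpos.ne', hQ,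
          Real.log_div (mul_pos hf hg).ne' hh.ne', Real.log_mul hf.ne' hg.ne']
      have key : (1 : ℝ) - Q a b c / P a b c ≤ Real.log (P a b c) + Real.log (Ph c)
          - Real.log (Pf a c) - Real.log (Pg b c) := by linarith [hlog, hexp.symm.le, hexp.le]
      have := mul_le_mul_of_nonneg_left key hpos.le
      calc P a b c - Q a b c = P a b c * (1 - Q a b c / P a b c) := by
            field_simp
        _ ≤ _ := this
  have sumP : ∑ a, ∑ b, ∑ c, P a b c = ∑ c, Ph c := by
    have := t3 (fun _ => (1:ℝ))
    simpa using this
  have sumQ : ∑ a, ∑ b, ∑ c, Q a b c = ∑ c, Ph c := by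
    have reord : ∑ a, ∑ b, ∑ c, Q a b c = ∑ c, ∑ a, ∑ b, Q a b c :=
      calc ∑ a, ∑ b, ∑ c, Q a b c
          = ∑ a, ∑ c, ∑ b, Q a b c := Finset.sum_congr rfl fun a _ => Finset.sum_comm
        _ = ∑ c, ∑ a, ∑ b, Q a b c := Finset.sum_comm
    rw [reord]
    refine Finset.sum_congr rfl fun c _ => ?_
    by_cases hc : Ph c = 0
    · simp [hQdef, hc]
    · simp only [hQdef, if_neg hc]
      calc ∑ a, ∑ b, Pf a c * Pg b c / Ph c
          = ∑ a, Pf a c * Ph c / Ph c := by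
            refine Finset.sum_congr rfl fun a _ => ?_
            rw [← Finset.sum_div, ← Finset.mul_sum, m4 c]
        _ = ∑ a, Pf a c := by
            refine Finset.sum_congr rfl fun a _ => ?_
            rw [mul_div_assoc, div_self hc, mul_one]
        _ = Ph c := m3 c
  have hle : ∑ a, ∑ b, ∑ c, (P a b c - Q a b c)
      ≤ ∑ a, ∑ b, ∑ c, P a b c * (Real.log (P a b c) + Real.log (Ph c)
          - Real.log (Pf a c) - Real.log (Pg b c)) :=
    Finset.sum_le_sum fun a _ => Finset.sum_le_sum fun b _ => Finset.sum_le_sum fun c _ => pw a b c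
  have hz : ∑ a, ∑ b, ∑ c, (P a b c - Q a b c) = 0 := by
    simp only [Finset.sum_sub_distrib, sumP, sumQ]
    ring
  rw [comb]
  linarith [hle, hz]
end CMI


section ProductStructure

variable {M : ℕ} {𝒳 𝒵 : Fin M → Type} {𝒮 : Type}

/-- Sample space for the multiterminal setup: sources, side information, auxiliaries. -/
abbrev Samp (𝒳 𝒵 : Fin M → Type) (𝒮 : Type) := ((∀ i, 𝒳 i) × 𝒮) × (∀ i, 𝒵 i)

/-- The joint pmf `p(x_{1..M}, s) ∏ₖ qₖ(z_k | x_k)` (product test-channel structure). -/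
noncomputable def jointPMF (p : (∀ i, 𝒳 i) × 𝒮 → ℝ) (q : ∀ i, 𝒳 i → 𝒵 i → ℝ) :
    Samp 𝒳 𝒵 𝒮 → ℝ :=
  fun ω => p ω.1 * ∏ i, q i (ω.1.1 i) (ω.2 i)

/-- The tuple `X_I` of source variables indexed by `I`. -/
def XI (I : Finset (Fin M)) : Samp 𝒳 𝒵 𝒮 → ∀ i : I, 𝒳 i := fun ω i => ω.1.1 i

/-- The tuple `Z_I` of auxiliary variables indexed by `I`. -/
def ZI (I : Finset (Fin M)) : Samp 𝒳 𝒵 𝒮 → ∀ i : I, 𝒵 i := fun ω i => ω.2 i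

/-- The side information variable `S`. -/
def Sv : Samp 𝒳 𝒵 𝒮 → 𝒮 := fun ω => ω.1.2

end ProductStructure

lemma sum_inst {α : Type} (i1 i2 : Fintype α) (f : α → ℝ) :
    @Finset.sum α ℝ _ (@univ α i1) f = @Finset.sum α ℝ _ (@univ α i2) f := by
  cases Subsingleton.elim i1 i2; rfl

lemma prod_inst {α : Type} (i1 i2 : Fintype α) (f : α → ℝ) :
    @Finset.prod α ℝ _ (@univ α i1) f = @Finset.prod α ℝ _ (@univ α i2) f := by
  cases Subsingleton.elim i1 i2; rfl

section Marg
variable {M : ℕ} {𝒵 : Fin M → Type} [∀ i, Fintype (𝒵 i)] [∀ i, DecidableEq (𝒵 i)]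

lemma marg (K : Finset (Fin M)) (t : ∀ k, 𝒵 k → ℝ) (G : (∀ k : K, 𝒵 k) → ℝ) :
    ∑ zf : ∀ k, 𝒵 k, G (fun k : K => zf k) * ∏ k, t k (zf k)
      = (∑ a : ∀ k : K, 𝒵 k, G a * ∏ k : K, t (k : Fin M) (a k))
        * ∏ k : {x : Fin M // x ∉ K}, (∑ z', t (k : Fin M) z') := by
  classical
  set E := Equiv.piEquivPiSubtypeProd (fun x : Fin M => x ∈ K) 𝒵 with hE
  rw [← Equiv.sum_comp E.symm (fun zf => G (fun k : K => zf k) * ∏ k, t k (zf k)),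
    Fintype.sum_prod_type]
  have h1 : ∀ (a : ∀ k : K, 𝒵 k) (b : ∀ k : {x : Fin M // x ∉ K}, 𝒵 (k : Fin M)),
      (fun k : K => (E.symm (a, b)) (k : Fin M)) = a := by
    intro a b
    funext k
    simp [hE, Equiv.piEquivPiSubtypeProd_symm_apply, k.2]
  have h2 : ∀ (a : ∀ k : K, 𝒵 k) (b : ∀ k : {x : Fin M // x ∉ K}, 𝒵 (k : Fin M)),
      (∏ k, t k ((E.symm (a, b)) k))
        = (∏ k : K, t (k : Fin M) (a k)) * ∏ k : {x : Fin M // x ∉ K}, t (k : Fin M) (b k) := by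
    intro a b
    rw [← Fintype.prod_subtype_mul_prod_subtype (fun x : Fin M => x ∈ K)
      (fun k => t k ((E.symm (a, b)) k))]
    congr 1
    · rw [prod_inst _ _]
      refine Finset.prod_congr rfl fun k _ => ?_
      congr 1
      simp [hE, Equiv.piEquivPiSubtypeProd_symm_apply, k.2]
    · rw [prod_inst _ _]
      refine Finset.prod_congr rfl fun k _ => ?_
      congr 1
      simp [hE, Equiv.piEquivPiSubtypeProd_symm_apply, k.2]
  rw [sum_inst _ _]
  calc ∑ a : ∀ k : K, 𝒵 k, ∑ b : ∀ k : {x : Fin M // x ∉ K}, 𝒵 (k : Fin M),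
        G (fun k : K => (E.symm (a, b)) (k : Fin M)) * ∏ k, t k ((E.symm (a, b)) k)
      = ∑ a : ∀ k : K, 𝒵 k, ∑ b : ∀ k : {x : Fin M // x ∉ K}, 𝒵 (k : Fin M),
          G a * ((∏ k : K, t (k : Fin M) (a k))
          * ∏ k : {x : Fin M // x ∉ K}, t (k : Fin M) (b k)) := by
        refine Finset.sum_congr rfl fun a _ => Finset.sum_congr rfl fun b _ => ?_
        rw [h1 a b, h2 a b]
    _ = (∑ a : ∀ k : K, 𝒵 k, G a * ∏ k : K, t (k : Fin M) (a k))
        * ∑ b : ∀ k : {x : Fin M // x ∉ K}, 𝒵 (k : Fin M),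
            ∏ k : {x : Fin M // x ∉ K}, t (k : Fin M) (b k) := by
        rw [Finset.sum_mul]
        refine Finset.sum_congr rfl fun a _ => ?_
        rw [Finset.mul_sum]
        refine Finset.sum_congr rfl fun b _ => ?_
        ring
    _ = _ := by
        congr 1
        rw [← Fintype.piFinset_univ, ← Finset.prod_univ_sum]
end Marg

section Channel
variable {M : ℕ} {𝒳 𝒵 : Fin M → Type} {𝒮 : Type}
  [∀ i, Fintype (𝒳 i)] [∀ i, DecidableEq (𝒳 i)]
  [∀ i, Fintype (𝒵 i)] [∀ i, DecidableEq (𝒵 i)] [Fintype 𝒮] [DecidableEq 𝒮]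

lemma pr_V (p : (∀ i, 𝒳 i) × 𝒮 → ℝ) (q : ∀ i, 𝒳 i → 𝒵 i → ℝ)
    (hq1 : ∀ i x, ∑ z, q i x z = 1) {J : Finset (Fin M)}
    {U : Type} [Fintype U] [DecidableEq U]
    (φ : ((∀ k, 𝒳 k) × 𝒮) → (∀ k : J, 𝒵 k) → U) (u : U) :
    pr (jointPMF p q) (fun ω => φ ω.1 (ZI J ω)) u
      = ∑ xs : (∀ k, 𝒳 k) × 𝒮, ∑ w : ∀ k : J, 𝒵 (k : Fin M),
          (if φ xs w = u then p xs else 0) * ∏ k : J, q (k : Fin M) (xs.1 k) (w k) := by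
  classical
  unfold pr jointPMF ZI
  rw [Fintype.sum_prod_type]
  refine Finset.sum_congr rfl fun xs _ => ?_
  have step : ∀ zf : ∀ k, 𝒵 k,
      (if φ (xs, zf).1 (fun k : J => (xs, zf).2 k) = u then
          p (xs, zf).1 * ∏ k, q k ((xs, zf).1.1 k) ((xs, zf).2 k) else 0)
        = (if φ xs (fun k : J => zf k) = u then p xs else 0) * ∏ k, q k (xs.1 k) (zf k) := by
    intro zf
    by_cases hc : φ xs (fun k : J => zf k) = u <;> simp [hc]
  rw [Finset.sum_congr rfl fun zf _ => step zf]
  rw [marg J (fun k => q k (xs.1 k)) (fun w => if φ xs w = u then p xs else 0)]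
  have h1 : (∏ k : {x : Fin M // x ∉ J}, ∑ z', q (k : Fin M) (xs.1 k) z') = 1 :=
    Finset.prod_eq_one fun k _ => hq1 _ _
  rw [h1, mul_one]

lemma pr_channel (p : (∀ i, 𝒳 i) × 𝒮 → ℝ) (q : ∀ i, 𝒳 i → 𝒵 i → ℝ)
    (hq1 : ∀ i x, ∑ z, q i x z = 1) {i : Fin M} {J : Finset (Fin M)} (hiJ : i ∉ J)
    {U : Type} [Fintype U] [DecidableEq U]
    (φ : ((∀ k, 𝒳 k) × 𝒮) → (∀ k : J, 𝒵 k) → U) (ψ : U → 𝒳 i)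
    (hψ : ∀ xs w, ψ (φ xs w) = xs.1 i) (z : 𝒵 i) (u : U) :
    pr (jointPMF p q) (fun ω => (ω.2 i, φ ω.1 (ZI J ω))) (z, u)
      = q i (ψ u) z * pr (jointPMF p q) (fun ω => φ ω.1 (ZI J ω)) u := by
  classical
  rw [pr_V p q hq1 φ u]
  unfold pr jointPMF ZI
  rw [Fintype.sum_prod_type, Finset.mul_sum]
  refine Finset.sum_congr rfl fun xs _ => ?_
  -- pinned channel factors
  set t' : ∀ k, 𝒵 k → ℝ := fun k z' =>
    if h : k = i then (if cast (congrArg 𝒵 h) z' = z then q k (xs.1 k) z' else 0)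
    else q k (xs.1 k) z' with ht'
  have hti : t' i = fun z' => if z' = z then q i (xs.1 i) z' else 0 := by
    funext z'; simp [ht']
  have htk : ∀ k, k ≠ i → t' k = q k (xs.1 k) := by
    intro k hk; funext z'; simp [ht', hk]
  have step : ∀ zf : ∀ k, 𝒵 k,
      (if ((xs, zf).2 i, φ (xs, zf).1 (fun k : J => (xs, zf).2 k)) = (z, u) then
          p (xs, zf).1 * ∏ k, q k ((xs, zf).1.1 k) ((xs, zf).2 k) else 0)
        = (if φ xs (fun k : J => zf k) = u then p xs else 0) * ∏ k, t' k (zf k) := by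
    intro zf
    have hsplit : ∀ (s : ∀ k, 𝒵 k → ℝ), ∏ k, s k (zf k) = s i (zf i) * ∏ k ∈ univ.erase i, s k (zf k) :=
      fun s => (Finset.mul_prod_erase univ (fun k => s k (zf k)) (mem_univ i)).symm
    have herase : ∏ k ∈ univ.erase i, t' k (zf k) = ∏ k ∈ univ.erase i, q k (xs.1 k) (zf k) :=
      Finset.prod_congr rfl fun k hk => by rw [htk k (Finset.ne_of_mem_erase hk)]
    by_cases hz : zf i = z
    · have : t' i (zf i) = q i (xs.1 i) (zf i) := by rw [hti]; simp [hz]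
      rw [hsplit t', hsplit (fun k => q k (xs.1 k)), this, herase]
      by_cases hc : φ xs (fun k : J => zf k) = u <;>
        simp [Prod.ext_iff, hz, hc]
    · have : t' i (zf i) = 0 := by rw [hti]; simp [hz]
      rw [hsplit t', this, zero_mul, mul_zero]
      rw [if_neg]
      simp [Prod.ext_iff, hz]
  rw [Finset.sum_congr rfl fun zf _ => step zf]
  rw [marg J t' (fun w => if φ xs w = u then p xs else 0)]
  have hJprod : ∀ w : ∀ k : J, 𝒵 (k : Fin M),
      ∏ k : J, t' (k : Fin M) (w k) = ∏ k : J, q (k : Fin M) (xs.1 k) (w k) :=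
    fun w => Finset.prod_congr rfl fun k _ => by
      rw [htk (k : Fin M) (fun h => hiJ (h ▸ k.2))]
  have hcompl : (∏ k : {x : Fin M // x ∉ J}, ∑ z', t' (k : Fin M) z') = q i (xs.1 i) z := by
    rw [Fintype.prod_eq_single (⟨i, hiJ⟩ : {x : Fin M // x ∉ J})]
    · rw [hti]
      simp
    · intro k hk
      have hki : (k : Fin M) ≠ i := fun h => hk (Subtype.ext h)
      rw [htk _ hki]
      exact hq1 _ _
  rw [hcompl]
  rw [Finset.sum_congr rfl fun w _ => by rw [hJprod w]]
  -- now: (∑ w, (if φ xs w = u then p xs else 0) * ∏ q) * q i (xs.1 i) z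
  --    = q i (ψ u) z * ∑ w, ...
  by_cases hS : (∑ w : ∀ k : J, 𝒵 (k : Fin M),
      (if φ xs w = u then p xs else 0) * ∏ k : J, q (k : Fin M) (xs.1 k) (w k)) = 0
  · rw [hS, zero_mul, mul_zero]
  · obtain ⟨w, _, hw⟩ := Finset.exists_ne_zero_of_sum_ne_zero hS
    have hc : φ xs w = u := by
      by_contra hc
      simp [hc] at hw
    have : ψ u = xs.1 i := by rw [← hc, hψ]
    rw [this, mul_comm]
end Channel

section CondEnt
variable {M : ℕ} {𝒳 𝒵 : Fin M → Type} {𝒮 : Type}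
  [∀ i, Fintype (𝒳 i)] [∀ i, DecidableEq (𝒳 i)]
  [∀ i, Fintype (𝒵 i)] [∀ i, DecidableEq (𝒵 i)] [Fintype 𝒮] [DecidableEq 𝒮]

lemma condEnt_channel (p : (∀ i, 𝒳 i) × 𝒮 → ℝ) (q : ∀ i, 𝒳 i → 𝒵 i → ℝ)
    (hq1 : ∀ i x, ∑ z, q i x z = 1) {i : Fin M} {J : Finset (Fin M)} (hiJ : i ∉ J)
    {U : Type} [Fintype U] [DecidableEq U]
    (φ : ((∀ k, 𝒳 k) × 𝒮) → (∀ k : J, 𝒵 k) → U) (ψ : U → 𝒳 i)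
    (hψ : ∀ xs w, ψ (φ xs w) = xs.1 i) :
    ent (jointPMF p q) (fun ω => (ω.2 i, φ ω.1 (ZI J ω)))
      - ent (jointPMF p q) (fun ω => φ ω.1 (ZI J ω))
      = -∑ ω : Samp 𝒳 𝒵 𝒮, jointPMF p q ω
          * (∑ z, q i (ω.1.1 i) z * Real.log (q i (ω.1.1 i) z)) := by
  classical
  set μ := jointPMF p q with hμdef
  set PV : U → ℝ := fun u => pr μ (fun ω => φ ω.1 (ZI J ω)) u with hPV
  have hpair : ∀ z u, pr μ (fun ω => (ω.2 i, φ ω.1 (ZI J ω))) (z, u) = q i (ψ u) z * PV u :=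
    fun z u => pr_channel p q hq1 hiJ φ ψ hψ z u
  have e1 : ent μ (fun ω => (ω.2 i, φ ω.1 (ZI J ω)))
      = -∑ z, ∑ u, (q i (ψ u) z * PV u) * Real.log (q i (ψ u) z * PV u) := by
    unfold ent
    rw [Fintype.sum_prod_type]
    congr 1
    exact Finset.sum_congr rfl fun z _ => Finset.sum_congr rfl fun u _ => by rw [hpair z u]
  have key : ∀ z u, (q i (ψ u) z * PV u) * Real.log (q i (ψ u) z * PV u)
      = PV u * (q i (ψ u) z * Real.log (q i (ψ u) z)) + q i (ψ u) z * (PV u * Real.log (PV u)) := by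
    intro z u
    by_cases h1 : q i (ψ u) z = 0
    · simp [h1]
    by_cases h2 : PV u = 0
    · simp [h2]
    rw [Real.log_mul h1 h2]; ring
  have e2 : ∑ z, ∑ u, (q i (ψ u) z * PV u) * Real.log (q i (ψ u) z * PV u)
      = (∑ u, PV u * ∑ z, q i (ψ u) z * Real.log (q i (ψ u) z)) + ∑ u, PV u * Real.log (PV u) := by
    rw [Finset.sum_congr rfl fun z _ => Finset.sum_congr rfl fun u _ => key z u]
    rw [Finset.sum_congr rfl fun z _ => Finset.sum_add_distrib, Finset.sum_add_distrib]
    congr 1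
    · rw [Finset.sum_comm]
      exact Finset.sum_congr rfl fun u _ => by rw [Finset.mul_sum]
    · rw [Finset.sum_comm]
      refine Finset.sum_congr rfl fun u _ => ?_
      rw [← Finset.sum_mul, hq1 i (ψ u), one_mul]
  have e3 : ent μ (fun ω => φ ω.1 (ZI J ω)) = -∑ u, PV u * Real.log (PV u) := rfl
  rw [e1, e2, e3]
  have e4 : ∑ u, PV u * ∑ z, q i (ψ u) z * Real.log (q i (ψ u) z)
      = ∑ ω : Samp 𝒳 𝒵 𝒮, μ ω * (∑ z, q i (ω.1.1 i) z * Real.log (q i (ω.1.1 i) z)) := by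
    rw [hPV]
    rw [pr_comp (μ := μ) (fun ω => φ ω.1 (ZI J ω))
      (fun u => ∑ z, q i (ψ u) z * Real.log (q i (ψ u) z))]
    refine Finset.sum_congr rfl fun ω _ => ?_
    rw [hψ ω.1 (ZI J ω)]
  rw [e4]
  ring
end CondEnt


section GenCongr
variable {Ω : Type} [Fintype Ω] {μ : Ω → ℝ} {A B T T2 : Type}
  [Fintype A] [DecidableEq A] [Fintype B] [DecidableEq B] [Fintype T] [DecidableEq T]
  [Fintype T2] [DecidableEq T2]

lemma ent_comm12 (f : Ω → A) (g : Ω → B) (W : Ω → T) :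
    ent μ (fun ω => (f ω, g ω, W ω)) = ent μ (fun ω => (g ω, f ω, W ω)) :=
  ent_congr (fun v => (v.2.1, v.1, v.2.2)) (fun v => (v.2.1, v.1, v.2.2))
    (fun _ => rfl) (fun _ => rfl)

lemma ent_rot3 (f : Ω → A) (g : Ω → B) (h : Ω → T) (W : Ω → T2) :
    ent μ (fun ω => (f ω, g ω, h ω, W ω)) = ent μ (fun ω => (g ω, h ω, f ω, W ω)) :=
  ent_congr (fun v => (v.2.1, v.2.2.1, v.1, v.2.2.2)) (fun v => (v.2.2.1, v.1, v.2.1, v.2.2.2))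
    (fun _ => rfl) (fun _ => rfl)
end GenCongr

section ZICongr
variable {M : ℕ} {𝒳 𝒵 : Fin M → Type} {𝒮 : Type}
  [∀ i, Fintype (𝒳 i)] [∀ i, DecidableEq (𝒳 i)]
  [∀ i, Fintype (𝒵 i)] [∀ i, DecidableEq (𝒵 i)] [Fintype 𝒮] [DecidableEq 𝒮]
  {μ : Samp 𝒳 𝒵 𝒮 → ℝ}

lemma ent_ZI_insert {T : Type} [Fintype T] [DecidableEq T] (W : Samp 𝒳 𝒵 𝒮 → T)
    {i : Fin M} {K : Finset (Fin M)} (hiK : i ∉ K) :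
    ent μ (fun ω => (ZI (insert i K) ω, W ω)) = ent μ (fun ω => (ω.2 i, ZI K ω, W ω)) := by
  refine ent_congr
    (fun v => (v.1 ⟨i, Finset.mem_insert_self i K⟩,
               (fun k : K => v.1 ⟨k, Finset.mem_insert_of_mem k.2⟩), v.2))
    (fun v => ((fun k : (insert i K : Finset (Fin M)) =>
        if h : (k : Fin M) = i then cast (congrArg 𝒵 h.symm) v.1
        else v.2.1 ⟨k, (Finset.mem_insert.mp k.2).resolve_left h⟩), v.2.2))
    (fun ω => rfl) (fun ω => ?_)
  refine Prod.ext ?_ rfl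
  funext k
  rcases k with ⟨k, hk⟩
  by_cases h : k = i
  · subst h; simp [ZI]
  · simp [ZI, h]

lemma ent_ZI_union {T : Type} [Fintype T] [DecidableEq T] (W : Samp 𝒳 𝒵 𝒮 → T)
    (A B : Finset (Fin M)) :
    ent μ (fun ω => (ZI (A ∪ B) ω, W ω)) = ent μ (fun ω => (ZI A ω, ZI B ω, W ω)) := by
  refine ent_congr
    (fun v => ((fun k : A => v.1 ⟨k, Finset.mem_union_left B k.2⟩),
               (fun k : B => v.1 ⟨k, Finset.mem_union_right A k.2⟩), v.2))
    (fun v => ((fun k : (A ∪ B : Finset (Fin M)) =>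
        if h : (k : Fin M) ∈ A then v.1 ⟨k, h⟩
        else v.2.1 ⟨k, (Finset.mem_union.mp k.2).resolve_left h⟩), v.2.2))
    (fun ω => rfl) (fun ω => ?_)
  refine Prod.ext ?_ rfl
  funext k
  by_cases h : (k : Fin M) ∈ A <;> simp [ZI, h]

lemma ent_ZI_union_pre {T T2 : Type} [Fintype T] [DecidableEq T] [Fintype T2] [DecidableEq T2]
    (P : Samp 𝒳 𝒵 𝒮 → T2) (W : Samp 𝒳 𝒵 𝒮 → T) (A B : Finset (Fin M)) :
    ent μ (fun ω => (P ω, ZI (A ∪ B) ω, W ω))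
      = ent μ (fun ω => (P ω, ZI A ω, ZI B ω, W ω)) := by
  refine ent_congr
    (fun v => (v.1, (fun k : A => v.2.1 ⟨k, Finset.mem_union_left B k.2⟩),
               (fun k : B => v.2.1 ⟨k, Finset.mem_union_right A k.2⟩), v.2.2))
    (fun v => (v.1, (fun k : (A ∪ B : Finset (Fin M)) =>
        if h : (k : Fin M) ∈ A then v.2.1 ⟨k, h⟩
        else v.2.2.1 ⟨k, (Finset.mem_union.mp k.2).resolve_left h⟩), v.2.2.2))
    (fun ω => rfl) (fun ω => ?_)
  refine Prod.ext rfl (Prod.ext ?_ rfl)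
  funext k
  by_cases h : (k : Fin M) ∈ A <;> simp [ZI, h]

lemma cond_reduce (hμ : ∀ ω, 0 ≤ μ ω) {J J' : Finset (Fin M)} (hJJ : J ⊆ J')
    {i : Fin M} (hi : i ∉ J') :
    ent μ (fun ω => (ZI (insert i J') ω, Sv ω)) - ent μ (fun ω => (ZI J' ω, Sv ω))
      ≤ ent μ (fun ω => (ZI (insert i J) ω, Sv ω)) - ent μ (fun ω => (ZI J ω, Sv ω)) := by
  have h0 := cmi_nonneg hμ (fun ω : Samp 𝒳 𝒵 𝒮 => ω.2 i) (ZI (J' \ J))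
    (fun ω => (ZI J ω, Sv ω))
  simp only [cmi] at h0
  have i1 : ent μ (fun ω => ((ω.2 i), ZI J ω, Sv ω))
      = ent μ (fun ω => (ZI (insert i J) ω, Sv ω)) :=
    (ent_ZI_insert Sv (fun h => hi (hJJ h))).symm
  have i2 : ent μ (fun ω => (ZI (J' \ J) ω, ZI J ω, Sv ω))
      = ent μ (fun ω => (ZI J' ω, Sv ω)) := by
    rw [← ent_ZI_union Sv (J' \ J) J, Finset.sdiff_union_of_subset hJJ]
  have i3 : ent μ (fun ω => ((ω.2 i), ZI (J' \ J) ω, ZI J ω, Sv ω))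
      = ent μ (fun ω => (ZI (insert i J') ω, Sv ω)) := by
    rw [← ent_ZI_union_pre (fun ω => ω.2 i) Sv (J' \ J) J,
      Finset.sdiff_union_of_subset hJJ]
    exact (ent_ZI_insert Sv hi).symm
  rw [i1, i2, i3] at h0
  linarith

lemma telescope (F : Finset (Fin M) → ℝ) (B : Finset (Fin M)) (I : Finset (Fin M)) :
    ∑ i ∈ I, (F (B ∪ I.filter (fun j => j ≤ i)) - F (B ∪ I.filter (fun j => j < i)))
      = F (B ∪ I) - F B := by
  induction I using Finset.induction_on_max with
  | empty => simp
  | insert a s ha ih =>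
    have hna : a ∉ s := fun h => lt_irrefl a (ha a h)
    rw [Finset.sum_insert hna]
    have h1 : (insert a s).filter (fun j => j ≤ a) = insert a s := by
      rw [Finset.filter_true_of_mem]
      intro x hx
      rcases Finset.mem_insert.mp hx with rfl | hx
      · exact le_refl x
      · exact (ha x hx).le
    have h2 : (insert a s).filter (fun j => j < a) = s := by
      rw [Finset.filter_insert, if_neg (lt_irrefl a), Finset.filter_true_of_mem]
      intro x hx; exact ha x hx
    have h3 : ∀ i ∈ s, (insert a s).filter (fun j => j ≤ i) = s.filter (fun j => j ≤ i) := by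
      intro i hi
      rw [Finset.filter_insert, if_neg (not_le.mpr (ha i hi))]
    have h4 : ∀ i ∈ s, (insert a s).filter (fun j => j < i) = s.filter (fun j => j < i) := by
      intro i hi
      rw [Finset.filter_insert, if_neg (asymm (ha i hi))]
    rw [h1, h2, Finset.sum_congr rfl (fun i hi => by rw [h3 i hi, h4 i hi]), ih]
    ring
end ZICongr



section Statement

variable {M : ℕ} {𝒳 𝒵 : Fin M → Type} {𝒮 : Type}
  [∀ i, Fintype (𝒳 i)] [∀ i, DecidableEq (𝒳 i)]
  [∀ i, Fintype (𝒵 i)] [∀ i, DecidableEq (𝒵 i)] [Fintype 𝒮] [DecidableEq 𝒮]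

/-- Subadditivity bound (Lemma A.6): for any nonempty `I ⊆ {1,...,M}`,
`I(X_I; Z_I | Z_{Iᶜ}, S) ≤ Σ_{i∈I} I(X_i; Z_i | Z_{{1..i-1}}, S)`. -/
theorem stmt7 (p : (∀ i, 𝒳 i) × 𝒮 → ℝ) (q : ∀ i, 𝒳 i → 𝒵 i → ℝ)
    (hp0 : ∀ a, 0 ≤ p a) (hp1 : ∑ a, p a = 1)
    (hq0 : ∀ i x z, 0 ≤ q i x z) (hq1 : ∀ i x, ∑ z, q i x z = 1)
    (I : Finset (Fin M)) (hI : I.Nonempty) :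
    cmi (jointPMF p q) (XI I) (ZI I) (fun ω => (ZI Iᶜ ω, Sv ω)) ≤
      ∑ i ∈ I, cmi (jointPMF p q) (fun ω => ω.1.1 i) (fun ω => ω.2 i)
        (fun ω => (ZI (Finset.Iio i) ω, Sv ω)) := by
  classical
  set μ := jointPMF p q with hμdef
  have hμ0 : ∀ ω, 0 ≤ μ ω := fun ω =>
    mul_nonneg (hp0 _) (Finset.prod_nonneg fun k _ => hq0 _ _ _)
  set F1 : Finset (Fin M) → ℝ := fun J => ent μ (fun ω => (ZI J ω, Sv ω)) with hF1
  set F2 : Finset (Fin M) → ℝ := fun J => ent μ (fun ω => (ZI J ω, XI I ω, Sv ω)) with hF2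
  set A : Fin M → Finset (Fin M) := fun i => Iᶜ ∪ I.filter (fun j => j < i) with hA
  have hiA : ∀ i ∈ I, i ∉ A i := by intro i hi; simp [hA, hi]
  have hIioA : ∀ i : Fin M, Finset.Iio i ⊆ A i := by
    intro i j hj
    rw [Finset.mem_Iio] at hj
    by_cases hjI : j ∈ I <;> simp [hA, hjI, hj]
  have hins : ∀ i ∈ I, Iᶜ ∪ I.filter (fun j => j ≤ i) = insert i (A i) := by
    intro i hi
    ext j
    by_cases hji : j = i
    · subst hji; simp [hA, hi]
    · simp [hA, hji, le_iff_lt_or_eq]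
      try tauto
  have hunion : Iᶜ ∪ I = univ := by ext j; by_cases h : j ∈ I <;> simp [h]
  have hunion2 : I ∪ Iᶜ = univ := by rw [Finset.union_comm]; exact hunion
  have T1 : ∑ i ∈ I, (F1 (insert i (A i)) - F1 (A i)) = F1 univ - F1 Iᶜ := by
    have ht := telescope F1 Iᶜ I
    rw [hunion] at ht
    rw [← ht]
    exact Finset.sum_congr rfl fun i hi => by rw [hins i hi]
  have T2 : ∑ i ∈ I, (F2 (insert i (A i)) - F2 (A i)) = F2 univ - F2 Iᶜ := by
    have ht := telescope F2 Iᶜ I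
    rw [hunion] at ht
    rw [← ht]
    exact Finset.sum_congr rfl fun i hi => by rw [hins i hi]
  have L0 : cmi μ (XI I) (ZI I) (fun ω => (ZI Iᶜ ω, Sv ω))
      = (F1 univ - F1 Iᶜ) - (F2 univ - F2 Iᶜ) := by
    simp only [cmi]
    have l1 : ent μ (fun ω => (XI I ω, ZI Iᶜ ω, Sv ω)) = F2 Iᶜ := ent_comm12 (XI I) (ZI Iᶜ) Sv
    have l2 : ent μ (fun ω => (ZI I ω, ZI Iᶜ ω, Sv ω)) = F1 univ := by
      rw [← ent_ZI_union Sv I Iᶜ, hunion2]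
    have l3 : ent μ (fun ω => (XI I ω, ZI I ω, ZI Iᶜ ω, Sv ω)) = F2 univ := by
      rw [ent_rot3 (XI I) (ZI I) (ZI Iᶜ) Sv,
        ← ent_ZI_union (fun ω => (XI I ω, Sv ω)) I Iᶜ, hunion2]
    have l4 : ent μ (fun ω => (ZI Iᶜ ω, Sv ω)) = F1 Iᶜ := rfl
    rw [l1, l2, l3, l4]
    ring
  have per : ∀ i ∈ I, (F1 (insert i (A i)) - F1 (A i)) - (F2 (insert i (A i)) - F2 (A i))
      ≤ cmi μ (fun ω => ω.1.1 i) (fun ω => ω.2 i) (fun ω => (ZI (Finset.Iio i) ω, Sv ω)) := by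
    intro i hi
    have hiIio : i ∉ Finset.Iio i := by simp
    have chA : ent μ (fun ω => (ω.2 i, ZI (A i) ω, XI I ω, Sv ω))
        - ent μ (fun ω => (ZI (A i) ω, XI I ω, Sv ω))
        = -∑ ω : Samp 𝒳 𝒵 𝒮, μ ω * (∑ z, q i (ω.1.1 i) z * Real.log (q i (ω.1.1 i) z)) :=
      condEnt_channel p q hq1 (hiA i hi)
        (fun xs w => (w, (fun k : I => xs.1 k), xs.2)) (fun v => v.2.1 ⟨i, hi⟩)
        (fun xs w => rfl)
    have chB : ent μ (fun ω => (ω.2 i, ZI (Finset.Iio i) ω, (ω.1.1 i), Sv ω))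
        - ent μ (fun ω => (ZI (Finset.Iio i) ω, (ω.1.1 i), Sv ω))
        = -∑ ω : Samp 𝒳 𝒵 𝒮, μ ω * (∑ z, q i (ω.1.1 i) z * Real.log (q i (ω.1.1 i) z)) :=
      condEnt_channel p q hq1 hiIio
        (fun xs w => (w, xs.1 i, xs.2)) (fun v => v.2.1) (fun xs w => rfl)
    have rA : F2 (insert i (A i)) = ent μ (fun ω => (ω.2 i, ZI (A i) ω, XI I ω, Sv ω)) :=
      ent_ZI_insert (fun ω => (XI I ω, Sv ω)) (hiA i hi)
    have rB : F1 (insert i (Finset.Iio i))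
        = ent μ (fun ω => (ω.2 i, ZI (Finset.Iio i) ω, Sv ω)) :=
      ent_ZI_insert Sv hiIio
    have condred : F1 (insert i (A i)) - F1 (A i)
        ≤ F1 (insert i (Finset.Iio i)) - F1 (Finset.Iio i) :=
      cond_reduce hμ0 (hIioA i) (hiA i hi)
    have hF2A : F2 (A i) = ent μ (fun ω => (ZI (A i) ω, XI I ω, Sv ω)) := rfl
    have cexp : cmi μ (fun ω => ω.1.1 i) (fun ω => ω.2 i)
        (fun ω => (ZI (Finset.Iio i) ω, Sv ω))
        = (F1 (insert i (Finset.Iio i)) - F1 (Finset.Iio i))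
          - (ent μ (fun ω => (ω.2 i, ZI (Finset.Iio i) ω, (ω.1.1 i), Sv ω))
             - ent μ (fun ω => (ZI (Finset.Iio i) ω, (ω.1.1 i), Sv ω))) := by
      simp only [cmi]
      have c1 : ent μ (fun ω => ((ω.1.1 i), ZI (Finset.Iio i) ω, Sv ω))
          = ent μ (fun ω => (ZI (Finset.Iio i) ω, (ω.1.1 i), Sv ω)) :=
        ent_comm12 _ _ _
      have c2 : ent μ (fun ω => ((ω.1.1 i), (ω.2 i), ZI (Finset.Iio i) ω, Sv ω))
          = ent μ (fun ω => ((ω.2 i), ZI (Finset.Iio i) ω, (ω.1.1 i), Sv ω)) :=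
        ent_rot3 _ _ _ _
      have c3 : ent μ (fun ω => (ZI (Finset.Iio i) ω, Sv ω)) = F1 (Finset.Iio i) := rfl
      rw [c1, c2, c3, ← rB]
      ring
    rw [cexp]
    linarith [chA, chB, condred, rA, hF2A]
  calc cmi μ (XI I) (ZI I) (fun ω => (ZI Iᶜ ω, Sv ω))
      = ∑ i ∈ I, ((F1 (insert i (A i)) - F1 (A i)) - (F2 (insert i (A i)) - F2 (A i))) := by
        rw [L0, ← T1, ← T2, ← Finset.sum_sub_distrib]
    _ ≤ ∑ i ∈ I, cmi μ (fun ω => ω.1.1 i) (fun ω => ω.2 i)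
        (fun ω => (ZI (Finset.Iio i) ω, Sv ω)) :=
        Finset.sum_le_sum per

end Statement
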